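/- Let f, s : [-1,1] → [-1,1] be continuous with f(0) = s(0) = 0 and f = t ∘ s where t : [-1,1] → [-1,1] is continuous with t(0) = 0, and suppose s₀ : [-1,1] → [-1,1] is sign-preserving with t ∘ s₀ = f. If there exist 0 ≤ x < x' ≤ 1 with s([x,x']) = [y⁻,y⁺] for some y⁻ < 0 ≤ y⁺, then t([0,1]) ⊇ t([y⁻,0]). -/

import Mathlib

open Set

/-- A positive radial departure of `f`. -/
def PosRD (f : ℝ → ℝ) (x₁ x₂ : ℝ) : Prop :=
  -1 ≤ x₁ ∧ x₁ < 0 ∧ 0 < x₂ ∧ x₂ ≤ 1 ∧ f '' Ioo x₁ x₂ = Ioo (f x₁) (f x₂)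

/-- A negative radial departure of `f`. -/
def NegRD (f : ℝ → ℝ) (x₁ x₂ : ℝ) : Prop :=
  -1 ≤ x₁ ∧ x₁ < 0 ∧ 0 < x₂ ∧ x₂ ≤ 1 ∧ f '' Ioo x₁ x₂ = Ioo (f x₂) (f x₁)

/-- A radial departure of `f` (of either orientation). -/
def RadialDeparture (f : ℝ → ℝ) (x₁ x₂ : ℝ) : Prop := PosRD f x₁ x₂ ∨ NegRD f x₁ x₂

/-- A (right) departure of `g` (viewed as a map on `[0,1]`). -/
def Departure (g : ℝ → ℝ) (x : ℝ) : Prop := 0 < x ∧ x ≤ 1 ∧ g x ∉ g '' Ico 0 x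

/-- A left departure of `g` (viewed as a map on `[-1,0]`). -/
def LeftDeparture (g : ℝ → ℝ) (x : ℝ) : Prop := -1 ≤ x ∧ x < 0 ∧ g x ∉ g '' Ioc x 0

/-- A (right) contour point of `g`: a departure `α` such that every departure past `α`
is preceded (within `(α, x]`) by a departure of orientation opposite to that of `α`. -/
def ContourPoint (g : ℝ → ℝ) (α : ℝ) : Prop :=
  Departure g α ∧
    ∀ x, Departure g x → α < x → ∃ y, Departure g y ∧ α < y ∧ y ≤ x ∧ g α * g y < 0

/-- `[ym, yp]` is a liftable range for `t`. -/
def LiftableRange (t : ℝ → ℝ) (ym yp : ℝ) : Prop :=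
  -1 ≤ ym ∧ ym ≤ 0 ∧ 0 ≤ yp ∧ yp ≤ 1 ∧
  t '' Icc ym 0 ⊆ t '' Icc 0 1 ∧
  ¬ ∃ y₁ y₂, RadialDeparture t y₁ y₂ ∧ ym ≤ y₁ ∧ yp < y₂

/-- `f` is linear (affine) on the interval `[a,b]`. -/
def LinearOn (f : ℝ → ℝ) (a b : ℝ) : Prop :=
  ∀ x ∈ Icc a b, (b - a) * f x = (b - x) * f a + (x - a) * f b

/-- `f` is piecewise-linear on `[-1,1]`. -/
def PiecewiseLinear (f : ℝ → ℝ) : Prop :=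
  ∃ n : ℕ, ∃ c : ℕ → ℝ, c 0 = -1 ∧ c n = 1 ∧ (∀ i < n, c i < c (i + 1)) ∧
    ∀ i < n, LinearOn f (c i) (c (i + 1))

/-- `t` is the contour factor of `g` (for maps on `[0,1]`): the contour points of `g`
are `0 = α₀ < α₁ < ⋯ < α_n`, `t (i/n) = g (α i)`, and `t` is linear in between. -/
def IsContourFactor (g t : ℝ → ℝ) : Prop :=
  ∃ n : ℕ, 0 < n ∧ ∃ α : ℕ → ℝ, α 0 = 0 ∧ (∀ i < n, α i < α (i + 1)) ∧
    (∀ x, ContourPoint g x ↔ ∃ i, 1 ≤ i ∧ i ≤ n ∧ x = α i) ∧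
    (∀ i ≤ n, t ((i : ℝ) / (n : ℝ)) = g (α i)) ∧
    (∀ i < n, LinearOn t ((i : ℝ) / (n : ℝ)) (((i : ℝ) + 1) / (n : ℝ)))

/-- `t` is the radial contour factor of `f`: its restriction to `[0,1]` is the contour
factor of `f|[0,1]`, and `t|[-1,0] ∘ r` is the contour factor of `f|[-1,0] ∘ r`,
where `r x = -x`. -/
def IsRadialContourFactor (f t : ℝ → ℝ) : Prop :=
  IsContourFactor f t ∧ IsContourFactor (fun x => f (-x)) (fun x => t (-x))

/-- `f` is non-constant on each of `[0,1]` and `[-1,0]`. -/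
def NonConstSides (f : ℝ → ℝ) : Prop :=
  (∃ a ∈ Icc (0:ℝ) 1, ∃ b ∈ Icc (0:ℝ) 1, f a ≠ f b) ∧
  (∃ a ∈ Icc (-1:ℝ) 0, ∃ b ∈ Icc (-1:ℝ) 0, f a ≠ f b)

theorem image_image_subset_of_comp_eq {α β γ : Type*} {t : β → γ} {s s₀ : α → β}
    {A : Set α} {B : Set β} (h : t ∘ s = t ∘ s₀) (hs₀ : MapsTo s₀ A B) :
    t '' (s '' A) ⊆ t '' B := by
  rw [← image_comp, h, image_comp]
  exact image_mono hs₀.image_subset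

theorem stmt16_general (t s f s₀ : ℝ → ℝ)
    (hfs : f = t ∘ s)
    (hs₀map : MapsTo s₀ (Icc (-1:ℝ) 1) (Icc (-1:ℝ) 1))
    (hsign₁ : ∀ z ∈ Icc (0:ℝ) 1, 0 ≤ s₀ z)
    (hfs₀ : f = t ∘ s₀)
    (x x' ym yp : ℝ) (h0x : 0 ≤ x) (hx'1 : x' ≤ 1)
    (hyp : 0 ≤ yp)
    (himg : s '' Icc x x' = Icc ym yp) :
    t '' Icc ym 0 ⊆ t '' Icc 0 1 := by
  have hs₀_nonneg : MapsTo s₀ (Icc 0 1) (Icc 0 1) := fun z hz =>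
    ⟨hsign₁ z hz, (hs₀map ⟨by linarith [hz.1], hz.2⟩).2⟩
  have hlift : Icc ym 0 ⊆ s '' Icc 0 1 :=
    calc Icc ym 0 ⊆ Icc ym yp := Icc_subset_Icc_right hyp
      _ = s '' Icc x x' := himg.symm
      _ ⊆ s '' Icc 0 1 := image_mono (Icc_subset_Icc h0x hx'1)
  calc t '' Icc ym 0 ⊆ t '' (s '' Icc 0 1) := image_mono hlift
    _ ⊆ t '' Icc 0 1 := image_image_subset_of_comp_eq (hfs.symm.trans hfs₀) hs₀_nonneg

theorem stmt16 (t s f s₀ : ℝ → ℝ)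
    (ht : Continuous t) (hs : Continuous s) (hf : Continuous f) (hs₀ : Continuous s₀)
    (ht0 : t 0 = 0) (hs0 : s 0 = 0) (hf0 : f 0 = 0)
    (hfs : f = t ∘ s)
    (hs₀map : MapsTo s₀ (Icc (-1:ℝ) 1) (Icc (-1:ℝ) 1))
    (hsign₁ : ∀ z ∈ Icc (0:ℝ) 1, 0 ≤ s₀ z) (hsign₂ : ∀ z ∈ Icc (-1:ℝ) 0, s₀ z ≤ 0)
    (hfs₀ : f = t ∘ s₀)
    (x x' ym yp : ℝ) (h0x : 0 ≤ x) (hxx' : x < x') (hx'1 : x' ≤ 1)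
    (hym : ym < 0) (hyp : 0 ≤ yp)
    (himg : s '' Icc x x' = Icc ym yp) :
    t '' Icc ym 0 ⊆ t '' Icc 0 1 :=
  stmt16_general t s f s₀ hfs hs₀map hsign₁ hfs₀ x x' ym yp h0x hx'1 hyp himg
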